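/- arXiv:1207.1269 — 6 statements merged into one kernel-verified Lean document; each statement's English description precedes it below -/
import Mathlib

section
/- Let 𝒜 ⊆ ℬ be unital Banach algebras with common unit e satisfying ‖e‖_𝒜 = ‖e‖_ℬ = 1, and suppose the norm on 𝒜 is a differential norm: ‖ab‖_𝒜 ≤ C(‖a‖_𝒜‖b‖_ℬ + ‖b‖_𝒜‖a‖_ℬ) for all a,b ∈ 𝒜. If the norms ‖·‖_𝒜 and ‖·‖_ℬ are not equivalent on 𝒜 (i.e., inf_{a∈𝒜, a≠0} ‖a‖_ℬ/‖a‖_𝒜 = 0), then C ≥ 1. -/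
/-! Testing the Leibniz inequality against the unit gives `‖a‖_𝒜 ≤ C (‖a‖_𝒜 + ‖a‖_ℬ)`.
Non-equivalence of the norms supplies `a` with `‖a‖_ℬ ≤ ε ‖a‖_𝒜`, whence `1 ≤ C (1 + ε)`
for every `ε > 0`, and letting `ε → 0` gives `1 ≤ C`. -/

open Filter Topology

theorem one_le_of_forall_pos_one_le_mul_one_add {C : ℝ} (h : ∀ ε > 0, 1 ≤ C * (1 + ε)) :
    1 ≤ C := by
  have hlim : Tendsto (fun ε : ℝ => C * (1 + ε)) (𝓝[>] 0) (𝓝 C) := by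
    have hcont : Continuous fun ε : ℝ => C * (1 + ε) := by fun_prop
    simpa using (hcont.tendsto 0).mono_left nhdsWithin_le_nhds
  exact ge_of_tendsto hlim (eventually_nhdsWithin_of_forall h)

theorem one_le_mul_one_add_of_le_mul_add {x y C ε : ℝ} (hx : 0 < x) (hy : 0 ≤ y)
    (hyx : y ≤ ε * x) (h : x ≤ C * (x + y)) : 1 ≤ C * (1 + ε) := by
  have hC : 0 ≤ C := by
    by_contra! hC
    nlinarith
  refine le_of_mul_le_mul_right ?_ hx
  calc 1 * x = x := one_mul x
    _ ≤ C * (x + y) := h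
    _ ≤ C * (x + ε * x) := by gcongr
    _ = C * (1 + ε) * x := by ring

/-- If `𝒜 ⊆ ℬ` are unital Banach algebras with common unit (`‖e‖_𝒜 = ‖e‖_ℬ = 1`),
the norm `nA` on `𝒜` is a differential norm with structure constant `C`, and the norms
are not equivalent on `𝒜` (the infimum of `‖a‖_ℬ/‖a‖_𝒜` is `0`), then `C ≥ 1`. -/
theorem stmt_1 {B : Type*} [NormedRing B] [NormedAlgebra ℂ B] [NormOneClass B]
    (S : Subalgebra ℂ B) (nA : B → ℝ) (C : ℝ)
    (h1 : nA 1 = 1)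
    (hdiff : ∀ a ∈ S, ∀ b ∈ S, nA (a * b) ≤ C * (nA a * ‖b‖ + nA b * ‖a‖))
    (hpos : ∀ a ∈ S, a ≠ 0 → 0 < nA a)
    (hnoneq : ∀ ε : ℝ, 0 < ε → ∃ a ∈ S, a ≠ 0 ∧ ‖a‖ ≤ ε * nA a) :
    1 ≤ C := by
  refine one_le_of_forall_pos_one_le_mul_one_add fun ε hε => ?_
  obtain ⟨a, haS, ha0, hsmall⟩ := hnoneq ε hε
  have hunit : nA a ≤ C * (nA a + ‖a‖) := by
    simpa [h1] using hdiff a haS 1 S.one_mem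
  exact one_le_mul_one_add_of_le_mul_add (hpos a haS ha0) (norm_nonneg a) hsmall hunit
end

section
/- Let 𝒜 ⊆ ℬ be unital Banach algebras with common unit, where the norm on 𝒜 satisfies ‖ab‖_𝒜 ≤ C(‖a‖_𝒜‖b‖_ℬ + ‖b‖_𝒜‖a‖_ℬ). Then for every c ∈ 𝒜, the spectral radii satisfy ρ_𝒜(c) = ρ_ℬ(c). -/
open scoped ENNReal

open Filter Topology

/-!
An algebra homomorphism can only shrink spectra, so `ρ_ℬ(c) ≤ ρ_𝒜(c)`. Conversely, the
differential norm inequality with `a = b = cⁿ` gives `‖c²ⁿ‖_𝒜 ≤ 2C ‖cⁿ‖_𝒜 ‖cⁿ‖_ℬ`; taking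
`n`-th roots and letting `n → ∞`, Gelfand's formula turns this into
`ρ_𝒜(c)² ≤ ρ_𝒜(c) ρ_ℬ(c)`.
-/

theorem spectralRadius_algHom_apply_le {𝕜 A B : Type*} [NormedField 𝕜] [Ring A] [Algebra 𝕜 A]
    [Ring B] [Algebra 𝕜 B] (φ : A →ₐ[𝕜] B) (a : A) :
    spectralRadius 𝕜 (φ a) ≤ spectralRadius 𝕜 a :=
  biSup_mono fun _ hk => AlgHom.spectrum_apply_subset φ a hk

theorem spectralRadius_le_of_norm_pow_two_mul_le {A B : Type*} [NormedRing A]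
    [NormedAlgebra ℂ A] [CompleteSpace A] [NormOneClass A] [NormedRing B] [NormedAlgebra ℂ B]
    [CompleteSpace B] (a : A) (b : B) {K : ℝ} (hK : 0 < K)
    (h : ∀ n : ℕ, ‖a ^ (2 * n)‖ ≤ K * ‖a ^ n‖ * ‖b ^ n‖) :
    spectralRadius ℂ a ≤ spectralRadius ℂ b := by
  set u : ℕ → ℝ := fun n => ‖a ^ n‖ ^ (1 / n : ℝ)
  set v : ℕ → ℝ := fun n => ‖b ^ n‖ ^ (1 / n : ℝ)
  rcases eq_or_ne (spectralRadius ℂ a) 0 with ha0 | ha0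
  · simp [ha0]
  have ha_top : spectralRadius ℂ a ≠ ∞ :=
    ((spectrum.spectralRadius_le_nnnorm a).trans_lt ENNReal.coe_lt_top).ne
  have hu := spectrum.pow_norm_pow_one_div_tendsto_nhds_spectralRadius a
  have hv := spectrum.pow_norm_pow_one_div_tendsto_nhds_spectralRadius b
  have hK_root : Tendsto (fun n : ℕ => ENNReal.ofReal (K ^ (1 / n : ℝ))) atTop (𝓝 1) := by
    simpa using ENNReal.tendsto_ofReal
      (tendsto_const_nhds.rpow tendsto_one_div_atTop_nhds_zero_nat (Or.inl hK.ne'))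
  have hlhs : Tendsto (fun n => ENNReal.ofReal (u (2 * n)) ^ 2) atTop
      (𝓝 (spectralRadius ℂ a ^ 2)) :=
    ENNReal.Tendsto.pow (hu.comp (tendsto_id.const_mul_atTop' two_pos))
  have hrhs : Tendsto (fun n : ℕ => ENNReal.ofReal (K ^ (1 / n : ℝ)) * ENNReal.ofReal (u n) *
      ENNReal.ofReal (v n)) atTop (𝓝 (1 * spectralRadius ℂ a * spectralRadius ℂ b)) :=
    ENNReal.Tendsto.mul
      (ENNReal.Tendsto.mul hK_root (Or.inl one_ne_zero) hu (Or.inr ENNReal.one_ne_top))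
      (Or.inl (by simpa using ha0)) hv (Or.inr (by simpa using ha_top))
  -- `(‖a²ⁿ‖^(1/2n))² = ‖a²ⁿ‖^(1/n)`, also for `n = 0` where both exponents are `0`.
  have hroot : ∀ n, ENNReal.ofReal (u (2 * n)) ^ 2 ≤
      ENNReal.ofReal (K ^ (1 / n : ℝ)) * ENNReal.ofReal (u n) * ENNReal.ofReal (v n) := by
    intro n
    rw [← ENNReal.ofReal_pow (by positivity), ← ENNReal.ofReal_mul (by positivity),
      ← ENNReal.ofReal_mul (by positivity)]
    refine ENNReal.ofReal_le_ofReal ?_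
    calc u (2 * n) ^ 2 = ‖a ^ (2 * n)‖ ^ (1 / n : ℝ) := by
          rw [← Real.rpow_mul_natCast (norm_nonneg _)]
          congr 1
          push_cast
          ring
      _ ≤ (K * ‖a ^ n‖ * ‖b ^ n‖) ^ (1 / n : ℝ) :=
          Real.rpow_le_rpow (norm_nonneg _) (h n) (by positivity)
      _ = K ^ (1 / n : ℝ) * u n * v n := by
          rw [Real.mul_rpow (by positivity) (norm_nonneg _),
            Real.mul_rpow hK.le (norm_nonneg _)]
  have hsq : spectralRadius ℂ a * spectralRadius ℂ a ≤
      spectralRadius ℂ a * spectralRadius ℂ b := by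
    simpa [sq] using le_of_tendsto_of_tendsto' hlhs hrhs hroot
  exact (ENNReal.mul_le_mul_iff_right ha0 ha_top).mp hsq

theorem stmt_2_general {A B : Type*} [NormedRing A] [NormedAlgebra ℂ A] [CompleteSpace A]
    [NormOneClass A] [NormedRing B] [NormedAlgebra ℂ B] [CompleteSpace B]
    (ι : A →ₐ[ℂ] B) (C : ℝ)
    (hdiff : ∀ a b : A, ‖a * b‖ ≤ C * (‖a‖ * ‖ι b‖ + ‖b‖ * ‖ι a‖)) :
    ∀ c : A, spectralRadius ℂ c = spectralRadius ℂ (ι c) := by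
  intro c
  have hC : 0 < 2 * C := by
    have := hdiff 1 1
    simp only [one_mul, norm_one, map_one] at this
    nlinarith [norm_nonneg (1 : B)]
  have hpow (n : ℕ) : ‖c ^ (2 * n)‖ ≤ 2 * C * ‖c ^ n‖ * ‖ι c ^ n‖ := by
    have := hdiff (c ^ n) (c ^ n)
    rw [← pow_add, ← two_mul, map_pow] at this
    linarith
  exact le_antisymm (spectralRadius_le_of_norm_pow_two_mul_le c (ι c) hC hpow)
    (spectralRadius_algHom_apply_le ι c)

/-- If `𝒜 ⊆ ℬ` are unital Banach algebras with common unit, the inclusion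
`ι : 𝒜 → ℬ` is a continuous algebra homomorphism, and the norm of `𝒜` is a
differential norm (`‖ab‖_𝒜 ≤ C(‖a‖_𝒜‖b‖_ℬ + ‖b‖_𝒜‖a‖_ℬ)`), then the spectral radii
agree: `ρ_𝒜(c) = ρ_ℬ(c)` for every `c ∈ 𝒜`. -/
theorem stmt_2 {A B : Type*} [NormedRing A] [NormedAlgebra ℂ A] [CompleteSpace A]
    [NormOneClass A] [NormedRing B] [NormedAlgebra ℂ B] [CompleteSpace B] [NormOneClass B]
    (ι : A →ₐ[ℂ] B) (D C : ℝ) (hD : 0 < D)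
    (hcont : ∀ a : A, ‖ι a‖ ≤ D * ‖a‖)
    (hdiff : ∀ a b : A, ‖a * b‖ ≤ C * (‖a‖ * ‖ι b‖ + ‖b‖ * ‖ι a‖)) :
    ∀ c : A, spectralRadius ℂ c = spectralRadius ℂ (ι c) :=
  stmt_2_general ι C hdiff
end

section
/- Let ℬ be a unital C*-algebra and 𝒜 ⊆ ℬ a *-subalgebra with the same unit whose norm satisfies ‖ab‖_𝒜 ≤ C(‖a‖_𝒜‖b‖_ℬ + ‖b‖_𝒜‖a‖_ℬ) and ‖a*‖_𝒜 = ‖a‖_𝒜. If a ∈ 𝒜 is invertible in ℬ, then a⁻¹ ∈ 𝒜 and ‖a⁻¹‖_𝒜 ≤ (‖a‖_𝒜/‖a‖_ℬ²) · ∏_{k=0}^∞ ( 1 + 2 (‖a‖_𝒜²/‖a‖_ℬ²) (2C)^k ( 1 − 1/(‖a‖_ℬ²‖a⁻¹‖_ℬ²) )^{2^k − 1} ). -/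
/-!
Put `c = 1 - a⋆a / ‖a‖_ℬ²`. In the C*-algebra `ℬ` the spectrum of `a⋆a` lies in
`[‖a⁻¹‖_ℬ⁻², ‖a‖_ℬ²]`, so `‖c‖_ℬ ≤ d := 1 - 1/(‖a‖_ℬ²‖a⁻¹‖_ℬ²) < 1`, while `‖c‖_𝒜 ≤ 2‖a‖_𝒜²/‖a‖_ℬ²`.
Squaring with the differential norm, `‖y²‖_𝒜 ≤ 2C‖y‖_𝒜‖y‖_ℬ`, gives
`‖c^(2^k)‖_𝒜 ≤ 2(‖a‖_𝒜²/‖a‖_ℬ²)(2C)^k d^(2^k-1)`, a summable sequence. Writing `n < 2^N` in binary,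
`∑_{n < 2^N} ‖c^n‖_𝒜 ≤ ∏_{k < N} (1 + ‖c^(2^k)‖_𝒜)`, so the Neumann series `∑ cⁿ` converges in `𝒜`
to `(1 - c)⁻¹ = ‖a‖_ℬ² (a⋆a)⁻¹`, and `a⁻¹ = (a⋆a)⁻¹ a⋆` is in `𝒜` with the stated bound.
-/

open Finset

lemma norm_map_le_of_map_star {A B : Type*} [NormedRing A] [NormedAlgebra ℂ A] [CompleteSpace A]
    [NormOneClass A] [StarRing A] [CStarAlgebra B] (ι : A →ₐ[ℂ] B)
    (hstar : ∀ x, ι (star x) = star (ι x)) (hstarnorm : ∀ x : A, ‖star x‖ = ‖x‖) (y : A) :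
    ‖ι y‖ ≤ ‖y‖ := by
  have hsa : IsSelfAdjoint (ι (star y * y)) := by
    rw [map_mul, hstar]; exact .star_mul_self _
  have h : (‖ι (star y * y)‖₊ : ENNReal) ≤ ‖star y * y‖₊ := by
    rw [← hsa.spectralRadius_eq_nnnorm]
    exact (iSup_le_iSup_of_subset (AlgHom.spectrum_apply_subset ι _)).trans
      (spectrum.spectralRadius_le_nnnorm _)
  have hsq : ‖ι y‖ ^ 2 ≤ ‖y‖ ^ 2 :=
    calc ‖ι y‖ ^ 2 = ‖ι (star y * y)‖ := by rw [map_mul, hstar, CStarRing.norm_star_mul_self, sq]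
      _ ≤ ‖star y * y‖ := by exact_mod_cast h
      _ ≤ ‖y‖ ^ 2 := (norm_mul_le _ _).trans_eq (by rw [hstarnorm, sq])
  exact (pow_le_pow_iff_left₀ (norm_nonneg _) (norm_nonneg _) two_ne_zero).mp hsq

lemma spectrum.norm_inv_norm_le_norm_of_mem {𝕜 A : Type*} [NormedField 𝕜] [NormedRing A]
    [NormedAlgebra 𝕜 A] [CompleteSpace A] [NormOneClass A] {u : Aˣ} {t : 𝕜}
    (ht : t ∈ spectrum 𝕜 (u : A)) : ‖(↑u⁻¹ : A)‖⁻¹ ≤ ‖t‖ := by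
  have ht0 : t ≠ 0 := fun h ↦ spectrum.zero_notMem 𝕜 u.isUnit (h ▸ ht)
  have := spectrum.norm_le_norm_of_mem (spectrum.inv₀_mem_inv_iff.mpr ht)
  rw [norm_inv] at this
  exact inv_le_of_inv_le₀ (norm_pos_iff.mpr ht0) this

namespace CStarAlgebra

variable {B : Type*} [CStarAlgebra B] [Nontrivial B]

lemma spectrum_star_mul_self_subset_Icc (x : Bˣ) :
    spectrum ℝ (star (x : B) * x) ⊆ Set.Icc (‖(↑x⁻¹ : B)‖ ^ 2)⁻¹ (‖(x : B)‖ ^ 2) := by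
  intro t ht
  have ht0 : 0 ≤ t := spectrum_star_mul_self_nonneg t ht
  refine ⟨?_, ?_⟩
  · have hP : star (x : B) * x = ↑(star x * x) := by simp
    rw [hP] at ht
    have hinv : ‖(↑(star x * x)⁻¹ : B)‖ ≤ ‖(↑x⁻¹ : B)‖ ^ 2 :=
      calc ‖(↑(star x * x)⁻¹ : B)‖ = ‖(↑x⁻¹ : B) * star (↑x⁻¹ : B)‖ := by
            rw [mul_inv_rev, Units.val_mul, Units.coe_star_inv]
        _ ≤ ‖(↑x⁻¹ : B)‖ ^ 2 := (norm_mul_le _ _).trans_eq (by rw [norm_star, sq])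
    calc (‖(↑x⁻¹ : B)‖ ^ 2)⁻¹ ≤ ‖(↑(star x * x)⁻¹ : B)‖⁻¹ := inv_anti₀ (Units.norm_pos _) hinv
      _ ≤ ‖t‖ := spectrum.norm_inv_norm_le_norm_of_mem ht
      _ = t := Real.norm_of_nonneg ht0
  · calc t = ‖t‖ := (Real.norm_of_nonneg ht0).symm
      _ ≤ ‖star (x : B) * x‖ := spectrum.norm_le_norm_of_mem ht
      _ = ‖(x : B)‖ ^ 2 := by rw [CStarRing.norm_star_mul_self, sq]

lemma norm_one_sub_smul_star_mul_self_le (x : Bˣ) :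
    ‖1 - (‖(x : B)‖ ^ 2)⁻¹ • (star (x : B) * x)‖ ≤
      1 - 1 / (‖(x : B)‖ ^ 2 * ‖(↑x⁻¹ : B)‖ ^ 2) := by
  set M := ‖(x : B)‖ ^ 2
  have hM : 0 < M := by have := Units.norm_pos x; positivity
  have hcfc : 1 - M⁻¹ • (star (x : B) * x) = cfc (fun t : ℝ ↦ 1 - M⁻¹ * t) (star (x : B) * x) := by
    rw [cfc_sub .., cfc_const_one .., cfc_const_mul_id ..]
  have hbound : 1 / (M * ‖(↑x⁻¹ : B)‖ ^ 2) = M⁻¹ * (‖(↑x⁻¹ : B)‖ ^ 2)⁻¹ := by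
    rw [one_div, mul_inv]
  have hspec : ∀ t ∈ spectrum ℝ (star (x : B) * x),
      M⁻¹ * (‖(↑x⁻¹ : B)‖ ^ 2)⁻¹ ≤ M⁻¹ * t ∧ M⁻¹ * t ≤ 1 := fun t ht ↦
    ⟨by gcongr; exact (spectrum_star_mul_self_subset_Icc x ht).1,
      by rw [inv_mul_le_one₀ hM]; exact (spectrum_star_mul_self_subset_Icc x ht).2⟩
  rw [hcfc, hbound]
  refine norm_cfc_le ?_ fun t ht ↦ ?_
  · obtain ⟨t, ht⟩ := ContinuousFunctionalCalculus.spectrum_nonempty (R := ℝ)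
      (star (x : B) * x) (IsSelfAdjoint.star_mul_self _)
    linarith [hspec t ht]
  · obtain ⟨hlo, hhi⟩ := hspec t ht
    rw [Real.norm_of_nonneg (by linarith)]
    linarith

end CStarAlgebra

lemma norm_one_sub_inv_smul_star_mul_self_le {A : Type*} [NormedRing A] [NormOneClass A]
    [StarRing A] [NormedAlgebra ℝ A] (hstarnorm : ∀ x : A, ‖star x‖ = ‖x‖) {a : A} {β : ℝ}
    (hβ : 0 < β) (hβa : β ≤ ‖a‖) :
    ‖1 - (β ^ 2)⁻¹ • (star a * a)‖ ≤ 2 * (‖a‖ ^ 2 / β ^ 2) := by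
  have hM : 1 ≤ ‖a‖ ^ 2 / β ^ 2 := by rw [one_le_div (by positivity)]; gcongr
  calc ‖1 - (β ^ 2)⁻¹ • (star a * a)‖ ≤ ‖(1 : A)‖ + ‖(β ^ 2)⁻¹ • (star a * a)‖ := norm_sub_le _ _
    _ ≤ 1 + ‖a‖ ^ 2 / β ^ 2 := by
      rw [norm_one, norm_smul, norm_inv, norm_pow, Real.norm_of_nonneg hβ.le, inv_mul_eq_div]
      gcongr
      exact (norm_mul_le (star a) a).trans_eq (by rw [hstarnorm, sq])
    _ ≤ 2 * (‖a‖ ^ 2 / β ^ 2) := by linarith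

lemma Nat.two_pow_succ_sub_one (k : ℕ) : 2 ^ (k + 1) - 1 = (2 ^ k - 1) + 2 ^ k := by
  have := Nat.one_le_two_pow (n := k)
  rw [pow_succ]
  omega

def IsDifferentialNorm {A B F : Type*} [NormedRing A] [NormedRing B] [FunLike F A B] (ι : F)
    (C : ℝ) : Prop :=
  ∀ x y : A, ‖x * y‖ ≤ C * (‖x‖ * ‖ι y‖ + ‖y‖ * ‖ι x‖)

namespace IsDifferentialNorm

variable {A B F : Type*} [NormedRing A] [NormedRing B] [FunLike F A B] [MonoidHomClass F A B]
  {ι : F} {C : ℝ}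

lemma nonneg [NormOneClass A] (h : IsDifferentialNorm ι C) : 0 ≤ C := by
  have h1 := h 1 1
  simp only [mul_one, norm_one, map_one] at h1
  nlinarith [norm_nonneg (1 : B)]

lemma norm_pow_two_pow_le (h : IsDifferentialNorm ι C) (hC : 0 ≤ C) {x : A} {M d : ℝ}
    (hx : ‖x‖ ≤ M) (hιx : ‖ι x‖ ≤ d) (k : ℕ) :
    ‖x ^ 2 ^ k‖ ≤ M * (2 * C) ^ k * d ^ (2 ^ k - 1) := by
  induction k with
  | zero => simpa using hx
  | succ k ih =>
    have hιpow : ‖ι (x ^ 2 ^ k)‖ ≤ d ^ 2 ^ k := by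
      rw [map_pow]
      exact (norm_pow_le' _ (Nat.two_pow_pos k)).trans (pow_le_pow_left₀ (norm_nonneg _) hιx _)
    calc ‖x ^ 2 ^ (k + 1)‖ = ‖x ^ 2 ^ k * x ^ 2 ^ k‖ := by rw [← pow_add, ← mul_two, pow_succ]
      _ ≤ 2 * C * ‖x ^ 2 ^ k‖ * ‖ι (x ^ 2 ^ k)‖ := by linarith [h (x ^ 2 ^ k) (x ^ 2 ^ k)]
      _ ≤ 2 * C * (M * (2 * C) ^ k * d ^ (2 ^ k - 1)) * d ^ 2 ^ k := by
          gcongr; exact mul_nonneg (by positivity) ((norm_nonneg _).trans ih)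
      _ = M * (2 * C) ^ (k + 1) * d ^ (2 ^ (k + 1) - 1) := by
          rw [Nat.two_pow_succ_sub_one, pow_add]; ring

end IsDifferentialNorm

lemma summable_pow_mul_pow_two_pow_sub_one (q : ℝ) {d : ℝ} (hd0 : 0 ≤ d) (hd1 : d < 1) :
    Summable fun k : ℕ ↦ q ^ k * d ^ (2 ^ k - 1) := by
  have hlim : Filter.Tendsto (fun k : ℕ ↦ ‖q‖ * d ^ 2 ^ k) Filter.atTop (nhds 0) := by
    simpa using ((tendsto_pow_atTop_nhds_zero_of_lt_one hd0 hd1).comp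
      (tendsto_pow_atTop_atTop_of_one_lt one_lt_two)).const_mul ‖q‖
  refine summable_of_ratio_norm_eventually_le (r := 1 / 2) (by norm_num) ?_
  filter_upwards [hlim.eventually_le_const (by norm_num : (0 : ℝ) < 1 / 2)] with k hk
  calc ‖q ^ (k + 1) * d ^ (2 ^ (k + 1) - 1)‖ = ‖q‖ * d ^ 2 ^ k * ‖q ^ k * d ^ (2 ^ k - 1)‖ := by
        simp only [norm_mul, norm_pow, Real.norm_of_nonneg hd0]
        rw [Nat.two_pow_succ_sub_one, pow_add, pow_succ]
        ring
    _ ≤ 1 / 2 * ‖q ^ k * d ^ (2 ^ k - 1)‖ := by gcongr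

lemma sum_range_two_pow_norm_pow_le_prod {R : Type*} [NormedRing R] [NormOneClass R] (c : R)
    (N : ℕ) : ∑ n ∈ range (2 ^ N), ‖c ^ n‖ ≤ ∏ k ∈ range N, (1 + ‖c ^ 2 ^ k‖) := by
  induction N with
  | zero => simp
  | succ N ih =>
    have hshift : ∑ n ∈ range (2 ^ N), ‖c ^ (2 ^ N + n)‖ ≤
        ‖c ^ 2 ^ N‖ * ∑ n ∈ range (2 ^ N), ‖c ^ n‖ := by
      rw [mul_sum]
      exact sum_le_sum fun n _ ↦ pow_add c _ n ▸ norm_mul_le _ _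
    calc ∑ n ∈ range (2 ^ (N + 1)), ‖c ^ n‖
        = ∑ n ∈ range (2 ^ N), ‖c ^ n‖ + ∑ n ∈ range (2 ^ N), ‖c ^ (2 ^ N + n)‖ := by
          rw [pow_succ, mul_two, sum_range_add]
      _ ≤ (∑ n ∈ range (2 ^ N), ‖c ^ n‖) * (1 + ‖c ^ 2 ^ N‖) := by linarith
      _ ≤ ∏ k ∈ range (N + 1), (1 + ‖c ^ 2 ^ k‖) := by
          rw [prod_range_succ]; gcongr

lemma Real.prod_range_one_add_le_tprod {g : ℕ → ℝ} (hg0 : ∀ k, 0 ≤ g k) (hg : Summable g)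
    (N : ℕ) : ∏ k ∈ range N, (1 + g k) ≤ ∏' k, (1 + g k) := by
  refine Monotone.ge_of_tendsto (monotone_nat_of_le_succ fun n ↦ ?_)
    (Real.multipliable_one_add_of_summable hg).hasProd.tendsto_prod_nat N
  rw [prod_range_succ]
  exact le_mul_of_one_le_right (prod_nonneg fun k _ ↦ by linarith [hg0 k]) (by linarith [hg0 n])

lemma sum_range_norm_pow_le_tprod {R : Type*} [NormedRing R] [NormOneClass R] {c : R}
    {g : ℕ → ℝ} (hg : Summable g) (hc : ∀ k, ‖c ^ 2 ^ k‖ ≤ g k) (m : ℕ) :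
    ∑ n ∈ range m, ‖c ^ n‖ ≤ ∏' k, (1 + g k) := by
  have hg0 k : 0 ≤ g k := (norm_nonneg _).trans (hc k)
  calc ∑ n ∈ range m, ‖c ^ n‖ ≤ ∑ n ∈ range (2 ^ m), ‖c ^ n‖ :=
        sum_le_sum_of_subset_of_nonneg (range_subset_range.mpr Nat.lt_two_pow_self.le)
          fun _ _ _ ↦ norm_nonneg _
    _ ≤ ∏ k ∈ range m, (1 + ‖c ^ 2 ^ k‖) := sum_range_two_pow_norm_pow_le_prod c m
    _ ≤ ∏ k ∈ range m, (1 + g k) := by gcongr with k; exact hc k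
    _ ≤ ∏' k, (1 + g k) := Real.prod_range_one_add_le_tprod hg0 hg m

lemma exists_mul_one_sub_eq_one_norm_le_tprod {R : Type*} [NormedRing R] [CompleteSpace R]
    [NormOneClass R] {c : R} {g : ℕ → ℝ} (hg : Summable g) (hc : ∀ k, ‖c ^ 2 ^ k‖ ≤ g k) :
    ∃ s : R, s * (1 - c) = 1 ∧ ‖s‖ ≤ ∏' k, (1 + g k) := by
  have hpartial := sum_range_norm_pow_le_tprod hg hc
  have hsum : Summable fun n ↦ ‖c ^ n‖ := summable_of_sum_range_le (fun _ ↦ norm_nonneg _) hpartial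
  exact ⟨∑' n, c ^ n, hsum.of_norm.tsum_pow_mul_one_sub, (norm_tsum_le_tsum_norm hsum).trans
    (Real.tsum_le_of_sum_range_le (fun _ ↦ norm_nonneg _) hpartial)⟩

theorem stmt_8_general {A B : Type*} [NormedRing A] [NormedAlgebra ℂ A] [CompleteSpace A]
    [StarRing A] [NormOneClass A]
    [NormedRing B] [StarRing B] [CStarRing B] [NormedAlgebra ℂ B] [CompleteSpace B]
    [StarModule ℂ B] [Nontrivial B]
    (ι : A →ₐ[ℂ] B)
    (hstar : ∀ x : A, ι (star x) = star (ι x))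
    (hstarnorm : ∀ x : A, ‖star x‖ = ‖x‖)
    (C : ℝ)
    (hdiff : ∀ x y : A, ‖x * y‖ ≤ C * (‖x‖ * ‖ι y‖ + ‖y‖ * ‖ι x‖))
    (a : A) (ha : IsUnit (ι a)) :
    ∃ b : A, ι b = Ring.inverse (ι a) ∧
      ‖b‖ ≤ ‖a‖ / ‖ι a‖ ^ 2 *
        ∏' k : ℕ, (1 + 2 * (‖a‖ ^ 2 / ‖ι a‖ ^ 2) * (2 * C) ^ k *
          (1 - 1 / (‖ι a‖ ^ 2 * ‖Ring.inverse (ι a)‖ ^ 2)) ^ (2 ^ k - 1)) := by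
  let _ : CStarAlgebra B := ⟨⟩
  have hC : 0 ≤ C := IsDifferentialNorm.nonneg (ι := ι) hdiff
  obtain ⟨u, hu⟩ := ha
  rw [← hu, Ring.inverse_unit]
  set r := (‖(u : B)‖ ^ 2)⁻¹
  set M := ‖a‖ ^ 2 / ‖(u : B)‖ ^ 2
  set d := 1 - 1 / (‖(u : B)‖ ^ 2 * ‖(↑u⁻¹ : B)‖ ^ 2)
  set c : A := 1 - r • (star a * a)
  have hιc : ‖ι c‖ ≤ d := by
    have : ι c = 1 - r • (star (u : B) * u) := by
      simp only [c, map_sub, map_one, AlgHom.map_smul_of_tower, map_mul, hstar, hu]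
    exact this ▸ CStarAlgebra.norm_one_sub_smul_star_mul_self_le u
  have hc : ‖c‖ ≤ 2 * M := norm_one_sub_inv_smul_star_mul_self_le hstarnorm (Units.norm_pos u)
    (hu ▸ norm_map_le_of_map_star ι hstar hstarnorm a)
  have hd : d < 1 :=
    sub_lt_self 1 (by have := Units.norm_pos u; have := Units.norm_pos u⁻¹; positivity)
  have hg : Summable fun k : ℕ ↦ 2 * M * (2 * C) ^ k * d ^ (2 ^ k - 1) := by
    simpa only [mul_assoc] using (summable_pow_mul_pow_two_pow_sub_one (2 * C)
      ((norm_nonneg _).trans hιc) hd).mul_left (2 * M)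
  obtain ⟨s, hs, hs_le⟩ := exists_mul_one_sub_eq_one_norm_le_tprod hg
    (IsDifferentialNorm.norm_pow_two_pow_le hdiff hC hc hιc)
  have hleft : (r • (s * star a)) * a = 1 := by
    rw [smul_mul_assoc, mul_assoc, ← mul_smul_comm, ← hs, sub_sub_cancel]
  refine ⟨r • (s * star a), (Units.inv_eq_of_mul_eq_one_left ?_).symm, ?_⟩
  · simpa only [map_mul, map_one, ← hu] using congrArg ι hleft
  · calc ‖r • (s * star a)‖ ≤ r * (‖s‖ * ‖a‖) := by
          rw [norm_smul, Real.norm_of_nonneg (by positivity), ← hstarnorm a]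
          gcongr
          exact norm_mul_le _ _
      _ ≤ r * ((∏' k, (1 + 2 * M * (2 * C) ^ k * d ^ (2 ^ k - 1))) * ‖a‖) := by gcongr
      _ = _ := by ring

/-- Norm-controlled inversion in a differential `*`-subalgebra `𝒜` (a Banach `*`-algebra
`A` embedded by a unit-preserving `*`-algebra homomorphism `ι` into a unital C*-algebra
`B`) whose norm is a differential norm with structure constant `C`: if `a ∈ 𝒜` is
invertible in `ℬ`, then `a⁻¹ ∈ 𝒜` and
`‖a⁻¹‖_𝒜 ≤ (‖a‖_𝒜/‖a‖_ℬ²) ∏_{k=0}^∞ (1 + 2(‖a‖_𝒜²/‖a‖_ℬ²)(2C)^k (1-1/(‖a‖_ℬ²‖a⁻¹‖_ℬ²))^{2^k-1})`. -/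
theorem stmt_8 {A B : Type*} [NormedRing A] [NormedAlgebra ℂ A] [CompleteSpace A]
    [StarRing A] [NormOneClass A]
    [NormedRing B] [StarRing B] [CStarRing B] [NormedAlgebra ℂ B] [CompleteSpace B]
    [StarModule ℂ B] [Nontrivial B]
    (ι : A →ₐ[ℂ] B) (hinj : Function.Injective ι)
    (hstar : ∀ x : A, ι (star x) = star (ι x))
    (hstarnorm : ∀ x : A, ‖star x‖ = ‖x‖)
    (C : ℝ)
    (hdiff : ∀ x y : A, ‖x * y‖ ≤ C * (‖x‖ * ‖ι y‖ + ‖y‖ * ‖ι x‖))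
    (a : A) (ha : IsUnit (ι a)) :
    ∃ b : A, ι b = Ring.inverse (ι a) ∧
      ‖b‖ ≤ ‖a‖ / ‖ι a‖ ^ 2 *
        ∏' k : ℕ, (1 + 2 * (‖a‖ ^ 2 / ‖ι a‖ ^ 2) * (2 * C) ^ k *
          (1 - 1 / (‖ι a‖ ^ 2 * ‖Ring.inverse (ι a)‖ ^ 2)) ^ (2 ^ k - 1)) :=
  stmt_8_general ι hstar hstarnorm C hdiff a ha
end

section
/- Let u ≥ 2, 0 < v < 1, c ≥ 1, set ξ = log₂(ln u / ln(1/v)) and assume ξ ≥ 4, and let K = (ln 2 − 1/2)⁻¹. If M ∈ ℕ satisfies M ≥ ξ + 1 and 2^M ln(1/v) − M ln u ≥ ln(Kc), then ∏_{k=M+1}^∞ (1 + c u^k v^{2^k}) ≤ e. -/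
/-!
For `n ≥ M` the hypothesis `M ≥ ξ + 1` gives `2 ln u ≤ 2^n ln(1/v)`, hence `u v^{2^n} ≤ 1/u ≤ 1/2`.
So the terms `x_n = c u^n v^{2^n}` at least halve from each index `n ≥ M` to the next, and
`∑_{n > M} x_n ≤ x_M ≤ K⁻¹ = ln 2 − 1/2 < 1`, the middle inequality being the exponentiated second
hypothesis on `M`. Finally `∏ (1 + x_n) ≤ exp (∑ x_n) ≤ e`.
-/

open Real

theorem summable_and_tsum_le_of_succ_le_mul {f : ℕ → ℝ} {r : ℝ} (hf : ∀ n, 0 ≤ f n)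
    (hr₀ : 0 ≤ r) (hr₁ : r < 1) (h : ∀ n, f (n + 1) ≤ r * f n) :
    Summable f ∧ ∑' n, f n ≤ f 0 / (1 - r) := by
  have hgeom : ∀ n, f n ≤ f 0 * r ^ n := fun n => by
    rw [mul_comm]; exact le_geom hr₀ n fun k _ => h k
  have hs : Summable fun n => f 0 * r ^ n := (summable_geometric_of_lt_one hr₀ hr₁).mul_left _
  have hfs : Summable f := hs.of_nonneg_of_le hf hgeom
  refine ⟨hfs, ?_⟩
  calc ∑' n, f n ≤ ∑' n, f 0 * r ^ n := hfs.tsum_le_tsum hgeom hs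
    _ = f 0 / (1 - r) := by rw [tsum_mul_left, tsum_geometric_of_lt_one hr₀ hr₁, div_eq_mul_inv]

theorem Real.tprod_one_add_le_exp_tsum {ι : Type*} {f : ι → ℝ} (hf : ∀ i, 0 ≤ f i)
    (hs : Summable f) : ∏' i, (1 + f i) ≤ exp (∑' i, f i) := by
  have hpos : ∀ i, 0 < 1 + f i := fun i => by linarith [hf i]
  rw [← rexp_tsum_eq_tprod hpos (summable_log_one_add_of_summable hs)]
  exact exp_le_exp.2 <| (summable_log_one_add_of_summable hs).tsum_le_tsum
    (fun i => by linarith [log_le_sub_one_of_pos (hpos i)]) hs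

theorem two_mul_le_two_pow_mul_of_logb_div_add_one_le {a b : ℝ} {M : ℕ} (ha : 0 < a)
    (hb : 0 < b) (h : logb 2 (a / b) + 1 ≤ M) : 2 * a ≤ 2 ^ M * b := by
  have h' : (2 : ℝ) ^ (logb 2 (a / b) + 1) ≤ 2 ^ (M : ℝ) :=
    rpow_le_rpow_of_exponent_le one_le_two h
  rw [rpow_add two_pos, rpow_logb two_pos one_lt_two.ne' (div_pos ha hb), rpow_one,
    rpow_natCast, div_mul_eq_mul_div, div_le_iff₀ hb] at h'
  linarith

theorem mul_pow_two_pow_le_half {u v : ℝ} {n : ℕ} (hu : 2 ≤ u) (hv : 0 < v)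
    (h : 2 * log u ≤ 2 ^ n * log v⁻¹) : u * v ^ 2 ^ n ≤ 1 / 2 := by
  have hlog : log (u * v ^ 2 ^ n) ≤ log (1 / 2) := by
    rw [log_mul (by positivity) (by positivity), log_pow, one_div, log_inv, ← neg_neg (log v),
      ← log_inv v]
    push_cast
    linarith [log_le_log two_pos hu]
  exact (log_le_log_iff (by positivity) (by norm_num)).1 hlog

theorem mul_pow_mul_pow_two_pow_le_inv {u v c K : ℝ} {M : ℕ} (hu : 0 < u) (hv : 0 < v)
    (hc : 0 < c) (hK : 0 < K) (h : log (K * c) ≤ 2 ^ M * log v⁻¹ - M * log u) :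
    c * u ^ M * v ^ 2 ^ M ≤ K⁻¹ := by
  have hlog : log (c * u ^ M * v ^ 2 ^ M) ≤ log K⁻¹ := by
    rw [log_mul (by positivity) (by positivity), log_mul hc.ne' (by positivity), log_pow,
      log_pow, log_inv, ← neg_neg (log v), ← log_inv v]
    rw [log_mul hK.ne' hc.ne'] at h
    push_cast
    linarith
  exact (log_le_log_iff (by positivity) (by positivity)).1 hlog

theorem mul_pow_succ_mul_pow_two_pow_succ_le {u v c r : ℝ} {n : ℕ} (hu : 0 ≤ u) (hv : 0 ≤ v)
    (hc : 0 ≤ c) (h : u * v ^ 2 ^ n ≤ r) :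
    c * u ^ (n + 1) * v ^ 2 ^ (n + 1) ≤ r * (c * u ^ n * v ^ 2 ^ n) :=
  calc c * u ^ (n + 1) * v ^ 2 ^ (n + 1) = (u * v ^ 2 ^ n) * (c * u ^ n * v ^ 2 ^ n) := by ring
    _ ≤ r * (c * u ^ n * v ^ 2 ^ n) := by gcongr

theorem stmt_14_general (u v c : ℝ) (M : ℕ) (hu : 2 ≤ u) (hv0 : 0 < v) (hv1 : v < 1)
    (hc : 1 ≤ c)
    (hM1 : Real.logb 2 (Real.log u / Real.log v⁻¹) + 1 ≤ (M : ℝ))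
    (hM2 : Real.log ((Real.log 2 - 1 / 2)⁻¹ * c) ≤
      (2 : ℝ) ^ M * Real.log v⁻¹ - (M : ℝ) * Real.log u) :
    Multipliable (fun k : ℕ => 1 + c * u ^ (M + 1 + k) * v ^ (2 ^ (M + 1 + k))) ∧
    ∏' k : ℕ, (1 + c * u ^ (M + 1 + k) * v ^ (2 ^ (M + 1 + k))) ≤ Real.exp 1 := by
  have hL : 0 < log v⁻¹ := log_pos (one_lt_inv_iff₀.2 ⟨hv0, hv1⟩)
  have hK : 0 < log 2 - 1 / 2 := by linarith [log_two_gt_d9]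
  have h2M := two_mul_le_two_pow_mul_of_logb_div_add_one_le (log_pos (by linarith)) hL hM1
  have hhalf : ∀ n, M ≤ n → u * v ^ 2 ^ n ≤ 1 / 2 := fun n hn =>
    mul_pow_two_pow_le_half hu hv0 (h2M.trans (by gcongr; norm_num))
  have hlead : c * u ^ M * v ^ 2 ^ M ≤ log 2 - 1 / 2 := by
    simpa using mul_pow_mul_pow_two_pow_le_inv (by linarith) hv0 (by linarith) (inv_pos.2 hK) hM2
  set x : ℕ → ℝ := fun k => c * u ^ (M + 1 + k) * v ^ 2 ^ (M + 1 + k)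
  have hx0 : ∀ k, 0 ≤ x k := fun k => by positivity
  have hfirst : x 0 ≤ 1 / 2 * (c * u ^ M * v ^ 2 ^ M) :=
    mul_pow_succ_mul_pow_two_pow_succ_le (by linarith) hv0.le (by linarith) (hhalf M le_rfl)
  obtain ⟨hs, hsum⟩ := summable_and_tsum_le_of_succ_le_mul hx0 (by norm_num : (0 : ℝ) ≤ 1 / 2)
    (by norm_num) fun k => mul_pow_succ_mul_pow_two_pow_succ_le (n := M + 1 + k) (by linarith)
      hv0.le (by linarith) (hhalf _ (by omega))
  refine ⟨Real.multipliable_one_add_of_summable hs, (tprod_one_add_le_exp_tsum hx0 hs).trans ?_⟩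
  gcongr
  calc ∑' k, x k ≤ x 0 / (1 - 1 / 2) := hsum
    _ ≤ c * u ^ M * v ^ 2 ^ M := by norm_num; linarith
    _ ≤ log 2 - 1 / 2 := hlead
    _ ≤ 1 := by linarith [log_two_lt_d9]

/-- Tail estimate: for `u ≥ 2`, `0 < v < 1`, `c ≥ 1`, `ξ = log₂(ln u/ln(1/v)) ≥ 4`,
`K = (ln 2 − 1/2)⁻¹`, if `M ≥ ξ + 1` and `2^M ln(1/v) − M ln u ≥ ln(Kc)`, then
`∏_{k=M+1}^∞ (1 + c u^k v^{2^k}) ≤ e`. -/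
theorem stmt_14 (u v c : ℝ) (M : ℕ) (hu : 2 ≤ u) (hv0 : 0 < v) (hv1 : v < 1)
    (hc : 1 ≤ c)
    (hξ : 4 ≤ Real.logb 2 (Real.log u / Real.log v⁻¹))
    (hM1 : Real.logb 2 (Real.log u / Real.log v⁻¹) + 1 ≤ (M : ℝ))
    (hM2 : Real.log ((Real.log 2 - 1 / 2)⁻¹ * c) ≤
      (2 : ℝ) ^ M * Real.log v⁻¹ - (M : ℝ) * Real.log u) :
    Multipliable (fun k : ℕ => 1 + c * u ^ (M + 1 + k) * v ^ (2 ^ (M + 1 + k))) ∧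
    ∏' k : ℕ, (1 + c * u ^ (M + 1 + k) * v ^ (2 ^ (M + 1 + k))) ≤ Real.exp 1 :=
  stmt_14_general u v c M hu hv0 hv1 hc hM1 hM2
end

section
/- Let 𝒜 ⊆ ℬ be unital Banach algebras with common unit and with a differential norm ‖ab‖_𝒜 ≤ C(‖a‖_𝒜‖b‖_ℬ + ‖b‖_𝒜‖a‖_ℬ), and assume ℬ is a unital C*-algebra and 𝒜 is a *-subalgebra. If a ∈ 𝒜 is invertible in ℬ, then a⁻¹ ∈ 𝒜 (inverse-closedness of differential subalgebras of C*-algebras). -/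
/-!
Brandenburg's trick: the differential norm gives `‖c ^ (2n)‖_𝒜 ≤ 2C ‖c‖_ℬ ^ n ‖c ^ n‖_𝒜`, and
Gelfand's formula turns this into `ρ_𝒜(c) ≤ ‖c‖_ℬ`. If `b = a* a` is invertible in `ℬ`, it is
strictly positive there, so `c = 1 - s b` has `‖c‖_ℬ < 1` for `s = ‖b‖_ℬ⁻¹`; hence `1 ∉ σ_𝒜(c)`,
i.e. `b` is invertible in `𝒜`. Doing the same for `a a*` gives `a` a left and a right inverse.
-/

open Filter Topology
open scoped NNReal ENNReal

lemma isUnit_of_isUnit_mul_of_isUnit_mul {M : Type*} [Monoid M] {a b c : M}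
    (hba : IsUnit (b * a)) (hac : IsUnit (a * c)) : IsUnit a :=
  isUnit_iff_exists_and_exists.mpr
    ⟨⟨c * ↑hac.unit⁻¹, by rw [← mul_assoc, hac.mul_val_inv]⟩,
      ⟨↑hba.unit⁻¹ * b, by rw [mul_assoc, hba.val_inv_mul]⟩⟩

lemma ENNReal.tendsto_coe_rpow_one_div_atTop {K : ℝ≥0} (hK : K ≠ 0) :
    Tendsto (fun n : ℕ ↦ (K : ℝ≥0∞) ^ (1 / n : ℝ)) atTop (𝓝 1) := by
  have h := ENNReal.tendsto_coe.mpr <| (NNReal.continuousAt_rpow (Or.inl hK)).tendsto.comp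
    (tendsto_const_nhds.prodMk_nhds tendsto_one_div_atTop_nhds_zero_nat)
  simp only [Function.comp_def, NNReal.rpow_zero, ENNReal.coe_one] at h
  exact h.congr fun n ↦ ENNReal.coe_rpow_of_ne_zero hK _

lemma ENNReal.rpow_one_div_two_mul_sq_le {a b K δ : ℝ≥0} {n : ℕ} (hn : n ≠ 0)
    (h : b ≤ K * δ ^ n * a) :
    ((b : ℝ≥0∞) ^ (1 / (2 * n : ℕ) : ℝ)) ^ 2 ≤
      (K : ℝ≥0∞) ^ (1 / n : ℝ) * (δ * (a : ℝ≥0∞) ^ (1 / n : ℝ)) := by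
  have hn' : (0 : ℝ) ≤ 1 / n := by positivity
  calc ((b : ℝ≥0∞) ^ (1 / (2 * n : ℕ) : ℝ)) ^ 2 = (b : ℝ≥0∞) ^ (1 / n : ℝ) := by
        rw [← ENNReal.rpow_natCast, ← ENNReal.rpow_mul]
        congr 1
        push_cast
        field_simp
    _ ≤ ((K * δ ^ n * a : ℝ≥0) : ℝ≥0∞) ^ (1 / n : ℝ) :=
        ENNReal.rpow_le_rpow (by exact_mod_cast h) hn'
    _ = (K : ℝ≥0∞) ^ (1 / n : ℝ) * (δ * (a : ℝ≥0∞) ^ (1 / n : ℝ)) := by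
        push_cast
        rw [ENNReal.mul_rpow_of_nonneg _ _ hn', ENNReal.mul_rpow_of_nonneg _ _ hn', one_div,
          ENNReal.pow_rpow_inv_natCast hn, mul_assoc]

/-- In the limit `n → ∞` the hypothesis becomes `ρ(c) ^ 2 ≤ δ ρ(c)` by Gelfand's formula. -/
theorem spectralRadius_le_of_nnnorm_pow_two_mul_le {A : Type*} [NormedRing A]
    [NormedAlgebra ℂ A] [CompleteSpace A] {c : A} {K δ : ℝ≥0} (hK : K ≠ 0)
    (h : ∀ n ≠ 0, ‖c ^ (2 * n)‖₊ ≤ K * δ ^ n * ‖c ^ n‖₊) : spectralRadius ℂ c ≤ δ := by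
  set r := spectralRadius ℂ c
  set f : ℕ → ℝ≥0∞ := fun n ↦ (‖c ^ n‖₊ : ℝ≥0∞) ^ (1 / n : ℝ)
  have hf : Tendsto f atTop (𝓝 r) :=
    spectrum.pow_nnnorm_pow_one_div_tendsto_nhds_spectralRadius c
  have hlhs : Tendsto (fun n ↦ f (2 * n) ^ 2) atTop (𝓝 (r ^ 2)) :=
    ENNReal.Tendsto.pow (hf.comp (tendsto_id.const_mul_atTop' two_pos))
  have hrhs : Tendsto (fun n : ℕ ↦ (K : ℝ≥0∞) ^ (1 / n : ℝ) * (δ * f n)) atTop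
      (𝓝 (δ * r)) := by
    simpa using ENNReal.Tendsto.mul (ENNReal.tendsto_coe_rpow_one_div_atTop hK) (by simp)
      (ENNReal.Tendsto.const_mul hf (by simp)) (by simp)
  have hr_sq : r ^ 2 ≤ δ * r := le_of_tendsto_of_tendsto hlhs hrhs <| by
    filter_upwards [eventually_ne_atTop 0] with n hn
    exact ENNReal.rpow_one_div_two_mul_sq_le hn (h n hn)
  have hr_top : r ≠ ⊤ := by
    refine ne_top_of_le_ne_top ?_ (spectrum.spectralRadius_le_pow_nnnorm_pow_one_div ℂ c 0)
    simp [ENNReal.mul_eq_top]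
  rcases eq_or_ne r 0 with hr0 | hr0
  · simp [hr0]
  · rw [pow_two] at hr_sq
    exact (ENNReal.mul_le_mul_iff_left hr0 hr_top).mp hr_sq

/-- The one place where the C*-identity enters: `0 ≤ 1 - x / ‖x‖ ≤ 1 - ε / ‖x‖` in the
C*-order, for `ε > 0` below the spectrum of `x`. -/
lemma IsStrictlyPositive.exists_pos_norm_one_sub_smul_lt_one {B : Type*} [CStarAlgebra B]
    [PartialOrder B] [StarOrderedRing B] [Nontrivial B] {x : B} (hx : IsStrictlyPositive x) :
    ∃ s : ℝ, 0 < s ∧ ‖1 - s • x‖ < 1 := by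
  obtain ⟨hx_sa, hspec⟩ :=
    CStarAlgebra.isStrictlyPositive_iff_isSelfAdjoint_and_spectrum_pos.mp hx
  obtain ⟨ε, hε, hεx⟩ := (CFC.exists_pos_algebraMap_le_iff hx_sa).mpr hspec
  set t := ‖x‖
  have ht : 0 < t := norm_pos_iff.mpr hx.isUnit.ne_zero
  have hxt : x ≤ algebraMap ℝ B t := hx_sa.le_algebraMap_norm_self
  have hsmul (r : ℝ) : t⁻¹ • algebraMap ℝ B r = algebraMap ℝ B (r / t) := by
    rw [Algebra.smul_def, ← map_mul, inv_mul_eq_div]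
  have h_nonneg : 0 ≤ 1 - t⁻¹ • x := by
    have := smul_le_smul_of_nonneg_left hxt (inv_nonneg.mpr ht.le)
    rwa [hsmul, div_self ht.ne', map_one, ← sub_nonneg] at this
  have h_le : 1 - t⁻¹ • x ≤ algebraMap ℝ B (1 - ε / t) := by
    have := smul_le_smul_of_nonneg_left hεx (inv_nonneg.mpr ht.le)
    rw [hsmul] at this
    rw [map_sub, map_one]
    exact sub_le_sub_left this 1
  have hεt : ε ≤ t := algebraMap_le_algebraMap.mp (hεx.trans hxt)
  refine ⟨t⁻¹, inv_pos.mpr ht, ?_⟩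
  calc ‖1 - t⁻¹ • x‖ ≤ 1 - ε / t :=
        (CStarAlgebra.norm_le_iff_le_algebraMap _
          (sub_nonneg.mpr ((div_le_one ht).mpr hεt)) h_nonneg).mpr h_le
    _ < 1 := by linarith [div_pos hε ht]

section DifferentialNorm

variable {A B : Type*} [NormedRing A] [NormedRing B] {F : Type*} [FunLike F A B]
  [MonoidHomClass F A B] {ι : F} {C : ℝ}

lemma nnnorm_pow_two_mul_le_of_differential (hC : 0 ≤ C)
    (hdiff : ∀ x y : A, ‖x * y‖ ≤ C * (‖x‖ * ‖ι y‖ + ‖y‖ * ‖ι x‖)) (c : A) {n : ℕ}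
    (hn : n ≠ 0) : ‖c ^ (2 * n)‖₊ ≤ C.toNNReal * 2 * ‖ι c‖₊ ^ n * ‖c ^ n‖₊ := by
  rw [← NNReal.coe_le_coe]
  push_cast
  rw [Real.coe_toNNReal C hC]
  have hpow : ‖ι (c ^ n)‖ ≤ ‖ι c‖ ^ n := map_pow ι c n ▸ norm_pow_le' _ (Nat.pos_of_ne_zero hn)
  calc ‖c ^ (2 * n)‖ = ‖c ^ n * c ^ n‖ := by rw [two_mul, pow_add]
    _ ≤ C * (‖c ^ n‖ * ‖ι (c ^ n)‖ + ‖c ^ n‖ * ‖ι (c ^ n)‖) := hdiff _ _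
    _ = C * 2 * ‖ι (c ^ n)‖ * ‖c ^ n‖ := by ring
    _ ≤ C * 2 * ‖ι c‖ ^ n * ‖c ^ n‖ := by gcongr

variable [NormedAlgebra ℂ A] [CompleteSpace A]

lemma spectralRadius_le_nnnorm_map_of_differential (hC : 0 < C)
    (hdiff : ∀ x y : A, ‖x * y‖ ≤ C * (‖x‖ * ‖ι y‖ + ‖y‖ * ‖ι x‖)) (c : A) :
    spectralRadius ℂ c ≤ ‖ι c‖₊ :=
  spectralRadius_le_of_nnnorm_pow_two_mul_le (by positivity)
    fun _ hn ↦ nnnorm_pow_two_mul_le_of_differential hC.le hdiff c hn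

lemma isUnit_one_sub_of_nnnorm_map_lt_one (hC : 0 < C)
    (hdiff : ∀ x y : A, ‖x * y‖ ≤ C * (‖x‖ * ‖ι y‖ + ‖y‖ * ‖ι x‖)) {c : A}
    (hc : ‖ι c‖₊ < 1) : IsUnit (1 - c) := by
  have h : spectralRadius ℂ c < ‖(1 : ℂ)‖₊ := by
    rw [nnnorm_one, ENNReal.coe_one]
    exact (spectralRadius_le_nnnorm_map_of_differential hC hdiff c).trans_lt
      (by exact_mod_cast hc)
  simpa using spectrum.mem_resolventSet_iff.mp (spectrum.mem_resolventSet_of_spectralRadius_lt h)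

end DifferentialNorm

lemma isUnit_of_isStrictlyPositive_map {A B : Type*} [NormedRing A] [NormedAlgebra ℂ A]
    [CompleteSpace A] [CStarAlgebra B] [PartialOrder B] [StarOrderedRing B] [Nontrivial B]
    (ι : A →ₐ[ℂ] B) {C : ℝ} (hC : 0 < C)
    (hdiff : ∀ x y : A, ‖x * y‖ ≤ C * (‖x‖ * ‖ι y‖ + ‖y‖ * ‖ι x‖)) {b : A}
    (hb : IsStrictlyPositive (ι b)) : IsUnit b := by
  obtain ⟨s, hs, hlt⟩ := hb.exists_pos_norm_one_sub_smul_lt_one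
  have hmap : ι (1 - (s : ℂ) • b) = 1 - s • ι b := by
    rw [map_sub, map_one, map_smul, Complex.coe_smul]
  have hunit := isUnit_one_sub_of_nnnorm_map_lt_one hC hdiff (c := 1 - (s : ℂ) • b)
    (by rw [hmap]; exact_mod_cast hlt)
  rw [sub_sub_cancel] at hunit
  exact (isUnit_smul_iff (Units.mk0 (s : ℂ) (by exact_mod_cast hs.ne')) b).mp hunit

theorem stmt_16_general {A B : Type*} [NormedRing A] [NormedAlgebra ℂ A] [CompleteSpace A]
    [StarRing A]
    [NormedRing B] [StarRing B] [CStarRing B] [NormedAlgebra ℂ B] [CompleteSpace B]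
    [StarModule ℂ B] [Nontrivial B]
    (ι : A →ₐ[ℂ] B)
    (hstar : ∀ x : A, ι (star x) = star (ι x))
    (C : ℝ)
    (hdiff : ∀ x y : A, ‖x * y‖ ≤ C * (‖x‖ * ‖ι y‖ + ‖y‖ * ‖ι x‖))
    (a : A) (ha : IsUnit (ι a)) :
    IsUnit a := by
  -- `B` comes without an order: use the positive cone `{star y * y}` of the C*-algebra.
  let _ : CStarAlgebra B := {}
  let _ := CStarAlgebra.spectralOrder B
  let _ := CStarAlgebra.spectralOrderedRing B
  have hdiff' (x y : A) : ‖x * y‖ ≤ max C 1 * (‖x‖ * ‖ι y‖ + ‖y‖ * ‖ι x‖) :=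
    (hdiff x y).trans (by gcongr; exact le_max_left C 1)
  have hunit {b : A} (hb : IsStrictlyPositive (ι b)) : IsUnit b :=
    isUnit_of_isStrictlyPositive_map ι (by positivity) hdiff' hb
  refine isUnit_of_isUnit_mul_of_isUnit_mul (b := star a) (c := star a) (hunit ?_) (hunit ?_)
  · rw [map_mul, hstar]
    exact CStarAlgebra.isStrictlyPositive_iff_eq_star_mul_self.mpr ⟨ι a, ha, rfl⟩
  · rw [map_mul, hstar]
    exact CStarAlgebra.isStrictlyPositive_iff_eq_mul_star_self.mpr ⟨ι a, ha, rfl⟩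

/-- Inverse-closedness of differential subalgebras of C*-algebras: if the Banach
`*`-algebra `𝒜` embeds (via an injective unit- and star-preserving algebra homomorphism
`ι` with `‖ι a‖ ≤ ‖a‖`) into a unital C*-algebra `ℬ` and carries a differential norm
`‖ab‖_𝒜 ≤ C(‖a‖_𝒜‖b‖_ℬ + ‖b‖_𝒜‖a‖_ℬ)`, then any `a ∈ 𝒜` invertible in `ℬ` is
invertible in `𝒜`. -/
theorem stmt_16 {A B : Type*} [NormedRing A] [NormedAlgebra ℂ A] [CompleteSpace A]
    [StarRing A] [NormOneClass A]
    [NormedRing B] [StarRing B] [CStarRing B] [NormedAlgebra ℂ B] [CompleteSpace B]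
    [StarModule ℂ B] [Nontrivial B]
    (ι : A →ₐ[ℂ] B) (hinj : Function.Injective ι)
    (hstar : ∀ x : A, ι (star x) = star (ι x))
    (hemb : ∀ x : A, ‖ι x‖ ≤ ‖x‖)
    (C : ℝ)
    (hdiff : ∀ x y : A, ‖x * y‖ ≤ C * (‖x‖ * ‖ι y‖ + ‖y‖ * ‖ι x‖))
    (a : A) (ha : IsUnit (ι a)) :
    IsUnit a :=
  stmt_16_general ι hstar C hdiff a ha
end

section
/- Let u ≥ 2, 0 < v < 1, c ≥ 1 with ξ = log₂(ln u/ln(1/v)) ≥ 4, K = (ln 2 − 1/2)⁻¹, and suppose Kc ≥ u^ξ, and let M ∈ ℕ with M + 1 ≤ 2 ln(Kc)/ln u. Then (1 + c u^ξ)^{M+1} ≤ e · exp( (8 ln²K)/ln u ) · exp( (8/ln u) · ln²c ). -/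
/-!
Since `K c ≥ u^ξ`, the base `1 + c u^ξ` is at most `1 + s` with `s = K c²`, and
`log (1 + s) ≤ log s + 1/s`. Multiplying by the exponent bound `L = 2 ln(Kc)/ln u`,
the term `L/s` is at most `1` because `2 ln t ≤ (ln 2) t` for `t ≥ 4`, while
`L ln s = 2 (ln K + ln c)(ln K + 2 ln c)/ln u` is a quadratic form in `ln K, ln c`
dominated by `8 (ln² K + ln² c)/ln u`.
-/

open Real

namespace Real

theorem two_mul_log_le_log_two_mul {t : ℝ} (ht : 4 ≤ t) : 2 * log t ≤ log 2 * t := by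
  -- `2 log t ≤ 2 (t/4 - 1) + 4 log 2`, which falls short of `t log 2` by `(log 2 - 1/2) (t - 4)`
  have hlog2 : 1 / 2 < log 2 := by linarith [log_two_gt_d9]
  have hquarter : log (t / 4) ≤ t / 4 - 1 := log_le_sub_one_of_pos (by positivity)
  have hsplit : log t = log (t / 4) + 2 * log 2 := by
    rw [log_div (by positivity) (by norm_num), show (4 : ℝ) = 2 ^ 2 by norm_num, log_pow]
    push_cast; ring
  nlinarith

theorem log_one_add_le_log_add_inv {x : ℝ} (hx : 0 < x) : log (1 + x) ≤ log x + x⁻¹ := by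
  have hfactor : 1 + x = x * (1 + x⁻¹) := by field_simp; ring
  rw [hfactor, log_mul hx.ne' (by positivity)]
  linarith [log_le_sub_one_of_pos (show 0 < 1 + x⁻¹ by positivity)]

theorem pow_le_exp_mul_log {x L : ℝ} (hx : 1 ≤ x) {n : ℕ} (hn : (n : ℝ) ≤ L) :
    x ^ n ≤ exp (L * log x) := by
  rw [← rpow_natCast, mul_comm, ← rpow_def_of_pos (by linarith)]
  exact rpow_le_rpow_of_exponent_le hx hn

end Real

theorem two_mul_add_mul_add_two_mul_le (a b : ℝ) :
    2 * (a + b) * (a + 2 * b) ≤ 8 * a ^ 2 + 8 * b ^ 2 := by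
  nlinarith [sq_nonneg (a - b)]

theorem log_mul_div_mul_inv_le_one {K c l : ℝ} (hK : 4 ≤ K) (hc : 1 ≤ c) (hl : log 2 ≤ l) :
    2 * log (K * c) / l * (K * c ^ 2)⁻¹ ≤ 1 := by
  have hl0 : 0 < l := lt_of_lt_of_le (log_pos one_lt_two) hl
  have hKc : 2 * log (K * c) ≤ log 2 * (K * c) := two_mul_log_le_log_two_mul (by nlinarith)
  have hKc2 : log 2 * (K * c) ≤ l * (K * c ^ 2) := by
    gcongr
    nlinarith
  rw [div_mul_eq_mul_div, div_le_one hl0, ← div_eq_mul_inv, div_le_iff₀ (by positivity)]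
  linarith

theorem log_mul_div_mul_log_le {K c l : ℝ} (hK : 0 < K) (hc : 0 < c) (hl : 0 ≤ l) :
    2 * log (K * c) / l * log (K * c ^ 2) ≤ 8 * log K ^ 2 / l + 8 / l * log c ^ 2 := by
  rw [log_mul hK.ne' hc.ne', log_mul hK.ne' (by positivity), log_pow, div_mul_eq_mul_div,
    div_mul_eq_mul_div, ← add_div]
  gcongr
  push_cast
  linarith [two_mul_add_mul_add_two_mul_le (log K) (log c)]

theorem log_mul_div_mul_log_one_add_le {K c l : ℝ} (hK : 4 ≤ K) (hc : 1 ≤ c)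
    (hl : log 2 ≤ l) :
    2 * log (K * c) / l * log (1 + K * c ^ 2) ≤ 1 + 8 * log K ^ 2 / l + 8 / l * log c ^ 2 := by
  have hl0 : 0 ≤ l := (log_nonneg one_le_two).trans hl
  have hL : 0 ≤ 2 * log (K * c) / l := by
    have : 0 ≤ log (K * c) := log_nonneg (by nlinarith)
    positivity
  calc 2 * log (K * c) / l * log (1 + K * c ^ 2)
      ≤ 2 * log (K * c) / l * (log (K * c ^ 2) + (K * c ^ 2)⁻¹) :=
        mul_le_mul_of_nonneg_left (log_one_add_le_log_add_inv (by positivity)) hL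
    _ = 2 * log (K * c) / l * log (K * c ^ 2) + 2 * log (K * c) / l * (K * c ^ 2)⁻¹ := mul_add _ _ _
    _ ≤ 1 + 8 * log K ^ 2 / l + 8 / l * log c ^ 2 := by
        linarith [log_mul_div_mul_log_le (by positivity : 0 < K) (by positivity : 0 < c) hl0,
          log_mul_div_mul_inv_le_one hK hc hl]

theorem stmt_19_general (u v c : ℝ) (M : ℕ) (hu : 2 ≤ u)
    (hc : 1 ≤ c)
    (hK : u ^ (Real.logb 2 (Real.log u / Real.log v⁻¹)) ≤ (Real.log 2 - 1 / 2)⁻¹ * c)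
    (hM : (M : ℝ) + 1 ≤ 2 * Real.log ((Real.log 2 - 1 / 2)⁻¹ * c) / Real.log u) :
    (1 + c * u ^ (Real.logb 2 (Real.log u / Real.log v⁻¹))) ^ (M + 1) ≤
      Real.exp 1 * Real.exp (8 * (Real.log (Real.log 2 - 1 / 2)⁻¹) ^ 2 / Real.log u) *
        Real.exp ((8 / Real.log u) * (Real.log c) ^ 2) := by
  set ξ := Real.logb 2 (Real.log u / Real.log v⁻¹)
  set K := (Real.log 2 - 1 / 2)⁻¹
  have hK4 : 4 ≤ K := by
    have hlog2 : 1 / 2 < log 2 := by linarith [log_two_gt_d9]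
    rw [le_inv_comm₀ (by norm_num) (by linarith)]
    linarith [log_two_lt_d9]
  have hlogu : log 2 ≤ log u := log_le_log two_pos hu
  have hbase : c * u ^ ξ ≤ K * c ^ 2 :=
    calc c * u ^ ξ ≤ c * (K * c) := mul_le_mul_of_nonneg_left hK (by linarith)
      _ = K * c ^ 2 := by ring
  calc (1 + c * u ^ ξ) ^ (M + 1) ≤ (1 + K * c ^ 2) ^ (M + 1) :=
        pow_le_pow_left₀ (by positivity) (by linarith) _
    _ ≤ exp (2 * log (K * c) / log u * log (1 + K * c ^ 2)) :=
        pow_le_exp_mul_log (by nlinarith) (by push_cast; exact hM)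
    _ ≤ exp (1 + 8 * log K ^ 2 / log u + 8 / log u * log c ^ 2) :=
        exp_le_exp.mpr (log_mul_div_mul_log_one_add_le hK4 hc hlogu)
    _ = _ := by rw [exp_add, exp_add]

/-- Case 2 of the finite-product estimate: for `u ≥ 2`, `0 < v < 1`, `c ≥ 1`,
`ξ = log₂(ln u/ln(1/v)) ≥ 4`, `K = (ln 2 − 1/2)⁻¹`, if `Kc ≥ u^ξ` and
`M + 1 ≤ 2 ln(Kc)/ln u`, then
`(1 + c u^ξ)^{M+1} ≤ e · exp(8 ln²K/ln u) · exp((8/ln u) ln²c)`. -/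
theorem stmt_19 (u v c : ℝ) (M : ℕ) (hu : 2 ≤ u) (hv0 : 0 < v) (hv1 : v < 1)
    (hc : 1 ≤ c)
    (hξ : 4 ≤ Real.logb 2 (Real.log u / Real.log v⁻¹))
    (hK : u ^ (Real.logb 2 (Real.log u / Real.log v⁻¹)) ≤ (Real.log 2 - 1 / 2)⁻¹ * c)
    (hM : (M : ℝ) + 1 ≤ 2 * Real.log ((Real.log 2 - 1 / 2)⁻¹ * c) / Real.log u) :
    (1 + c * u ^ (Real.logb 2 (Real.log u / Real.log v⁻¹))) ^ (M + 1) ≤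
      Real.exp 1 * Real.exp (8 * (Real.log (Real.log 2 - 1 / 2)⁻¹) ^ 2 / Real.log u) *
        Real.exp ((8 / Real.log u) * (Real.log c) ^ 2) :=
  stmt_19_general u v c M hu hc hK hM
end
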